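/- arXiv:1607.03010 — 3 statements merged into one kernel-verified Lean document; each statement's English description precedes it below -/
import Mathlib

section
/- Let S and T be strongly positive words in 𝓕 such that the word S⁻¹T is reduced (i.e., |S⁻¹T| = |S| + |T|). Then S⁻¹T is either strongly positive or strongly negative. -/
open Monoid

variable {I : Type*} {G : I → Type*} [∀ i, Group (G i)]

/-- The element of the free product represented by a list of letters. -/
def listProd (l : List (Σ i, G i)) : CoprodI G :=
  (l.map fun p => CoprodI.of p.2).prod

/-- The formal inverse of a list of letters. -/
def invList (l : List (Σ i, G i)) : List (Σ i, G i) :=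
  (l.map fun p => (⟨p.1, p.2⁻¹⟩ : Σ i, G i)).reverse

/-- A list of letters (of a reduced word) is *strongly positive* if every
nonempty suffix, viewed as an element of the free product, is `≻ 1`. -/
def StronglyPositiveList [LinearOrder (CoprodI G)] (l : List (Σ i, G i)) : Prop :=
  ∀ j < l.length, 1 < listProd (l.drop j)

/-!
If `S⁻¹T` has `|S| + |T|` letters, no cancellation happens when the letters of `S⁻¹` and `T` are
multiplied, so its reduced word is literally the concatenation of the two letter lists. A suffix of
it is then a suffix of `T`, hence positive, or `P⁻¹T` for a prefix `P` of `S`; as the suffixes of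
`S` are positive, `P ≤ S`. So every suffix is positive when `S < T`; when `T < S` the same argument
applies to the inverse `T⁻¹S`, and `S = T` forces the empty word.
-/

namespace Monoid.CoprodI.Word

variable {ι : Type*} {M : ι → Type*} [∀ i, Monoid (M i)]

section DecidableEq

variable [DecidableEq ι] [∀ i, DecidableEq (M i)]

theorem of_smul_eq_rcons {i : ι} (m : M i) {w : Word M} (h : w.fstIdx ≠ some i) :
    of m • w = rcons ⟨m, w, h⟩ := by
  rw [of_smul_def, equivPair_eq_of_fstIdx_ne h, mul_one]

theorem length_of_smul_le_of_fstIdx_ne {i : ι} (m : M i) {w : Word M} (h : w.fstIdx ≠ some i) :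
    (of m • w).toList.length ≤ w.toList.length + 1 := by
  rw [of_smul_eq_rcons m h, rcons]
  split <;> simp

theorem toList_of_smul_of_fstIdx_ne {i : ι} {m : M i} {w : Word M} (h : w.fstIdx ≠ some i)
    (hm : m ≠ 1) : (of m • w).toList = ⟨i, m⟩ :: w.toList := by
  rw [of_smul_eq_rcons m h, rcons, dif_neg hm]
  rfl

theorem length_of_smul_le_of_fstIdx_eq {i : ι} (m : M i) {w : Word M} (h : w.fstIdx = some i) :
    (of m • w).toList.length ≤ w.toList.length := by
  induction w using consRecOn with
  | empty => simp [fstIdx] at h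
  | cons j g w hw hg _ =>
    obtain rfl : j = i := by simpa using h
    have := length_of_smul_le_of_fstIdx_ne (m * g) hw
    rwa [map_mul, mul_smul, ← cons_eq_smul (h1 := hw) (h2 := hg)] at this

theorem length_of_smul_le {i : ι} (m : M i) (w : Word M) :
    (of m • w).toList.length ≤ w.toList.length + 1 := by
  by_cases h : w.fstIdx = some i
  · exact (length_of_smul_le_of_fstIdx_eq m h).trans (Nat.le_succ _)
  · exact length_of_smul_le_of_fstIdx_ne m h

theorem toList_of_smul_of_length_eq {i : ι} {m : M i} {w : Word M}
    (h : (of m • w).toList.length = w.toList.length + 1) :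
    (of m • w).toList = ⟨i, m⟩ :: w.toList := by
  have hw : w.fstIdx ≠ some i := fun hw => by
    have := length_of_smul_le_of_fstIdx_eq m hw
    omega
  have hm : m ≠ 1 := by
    rintro rfl
    simp at h
  exact toList_of_smul_of_fstIdx_ne hw hm

theorem length_list_prod_smul_le (l : List (Σ i, M i)) (w : Word M) :
    ((l.map fun p => of p.2).prod • w).toList.length ≤ l.length + w.toList.length := by
  induction l with
  | nil => simp
  | cons p l ih =>
    rw [List.map_cons, List.prod_cons, mul_smul, List.length_cons]
    have := length_of_smul_le p.2 ((l.map fun p => of p.2).prod • w)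
    omega

theorem toList_list_prod_smul_of_length_eq (l : List (Σ i, M i)) (w : Word M)
    (h : ((l.map fun p => of p.2).prod • w).toList.length = l.length + w.toList.length) :
    ((l.map fun p => of p.2).prod • w).toList = l ++ w.toList := by
  induction l with
  | nil => simp
  | cons p l ih =>
    rw [List.map_cons, List.prod_cons, mul_smul] at h ⊢
    have hle := length_list_prod_smul_le l w
    have hp := length_of_smul_le p.2 ((l.map fun p => of p.2).prod • w)
    rw [toList_of_smul_of_length_eq (by simp only [List.length_cons] at h; omega),
      ih (by simp only [List.length_cons] at h; omega)]
    rfl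

end DecidableEq

theorem toList_eq_of_prod_eq_of_length_eq (w : Word M) (l : List (Σ i, M i))
    (h : w.prod = (l.map fun p => of p.2).prod) (hlen : w.toList.length = l.length) :
    w.toList = l := by
  classical
  have hw : w = (l.map fun p => of p.2).prod • empty := h ▸ (equiv.apply_symm_apply w).symm
  rw [hw] at hlen ⊢
  simpa using toList_list_prod_smul_of_length_eq l empty (by simpa using hlen)

end Monoid.CoprodI.Word

theorem listProd_append (l₁ l₂ : List (Σ i, G i)) :
    listProd (l₁ ++ l₂) = listProd l₁ * listProd l₂ := by
  simp [listProd]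

theorem length_invList (l : List (Σ i, G i)) : (invList l).length = l.length := by
  simp [invList]

theorem invList_append (l₁ l₂ : List (Σ i, G i)) :
    invList (l₁ ++ l₂) = invList l₂ ++ invList l₁ := by
  simp [invList]

theorem invList_invList (l : List (Σ i, G i)) : invList (invList l) = l := by
  simp [invList, List.map_reverse, Function.comp_def]

theorem listProd_invList (l : List (Σ i, G i)) : listProd (invList l) = (listProd l)⁻¹ := by
  induction l with
  | nil => simp [invList, listProd]
  | cons p l ih =>
    rw [← List.singleton_append, invList_append, listProd_append, listProd_append, ih, mul_inv_rev]
    simp [invList, listProd]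

theorem drop_invList (l : List (Σ i, G i)) (j : ℕ) :
    (invList l).drop j = invList (l.take (l.length - j)) := by
  simp only [invList, List.drop_reverse, List.length_map, List.map_take]

section StronglyPositive

variable [LinearOrder (CoprodI G)] [MulLeftMono (CoprodI G)] {l₁ l₂ : List (Σ i, G i)}

theorem StronglyPositiveList.listProd_take_le (hl : StronglyPositiveList l₁) (n : ℕ) :
    listProd (l₁.take n) ≤ listProd l₁ := by
  conv_rhs => rw [← List.take_append_drop n l₁, listProd_append]
  rcases lt_or_ge n l₁.length with hn | hn
  · exact le_mul_of_one_le_right' (hl n hn).le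
  · rw [List.drop_eq_nil_of_le hn]
    exact (mul_one _).ge

theorem StronglyPositiveList.invList_append (h₁ : StronglyPositiveList l₁)
    (h₂ : StronglyPositiveList l₂) (h : listProd l₁ < listProd l₂) :
    StronglyPositiveList (invList l₁ ++ l₂) := by
  intro j hj
  rw [List.length_append, length_invList] at hj
  rcases lt_or_ge j l₁.length with hj₁ | hj₁
  · rw [List.drop_append_of_le_length (by rw [length_invList]; omega), listProd_append,
      drop_invList, listProd_invList, lt_inv_mul_iff_lt]
    exact (h₁.listProd_take_le _).trans_lt h
  · obtain ⟨k, rfl⟩ := Nat.exists_eq_add_of_le hj₁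
    rw [← length_invList l₁, List.drop_length_add_append]
    exact h₂ k (by omega)

end StronglyPositive

theorem stronglyPositive_or_stronglyNegative_of_inv_mul_general
    {I : Type*} {G : I → Type*} [∀ i, Group (G i)]
    [LinearOrder (CoprodI G)]
    [CovariantClass (CoprodI G) (CoprodI G) (· * ·) (· ≤ ·)]
    (S T V : CoprodI.Word G)
    (hS : StronglyPositiveList S.toList) (hT : StronglyPositiveList T.toList)
    (hV : V.prod = S.prod⁻¹ * T.prod)
    (hlen : V.toList.length = S.toList.length + T.toList.length) :
    StronglyPositiveList V.toList ∨ StronglyPositiveList (invList V.toList) := by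
  have hV' : V.toList = invList S.toList ++ T.toList := by
    refine CoprodI.Word.toList_eq_of_prod_eq_of_length_eq V _ ?_ ?_
    · change V.prod = listProd (invList S.toList ++ T.toList)
      rw [listProd_append, listProd_invList, hV]
      rfl
    · rw [hlen, List.length_append, length_invList]
  rcases lt_trichotomy S.prod T.prod with h | h | h
  · exact .inl (hV' ▸ hS.invList_append hT h)
  · classical
    have hV1 : V = .empty := CoprodI.Word.equiv.symm.injective (by
      change V.prod = 1
      rw [hV, h, inv_mul_cancel])
    left
    simp [hV1, StronglyPositiveList]
  · right
    rw [hV', invList_append, invList_invList]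
    exact hT.invList_append hS h

/-- Suppose `S`, `T` are strongly positive words and the word `S⁻¹T` is reduced
(i.e. `|S⁻¹T| = |S| + |T|`; here `V` is the reduced word of `S⁻¹T`). Then `S⁻¹T`
is either strongly positive or strongly negative. -/
theorem stronglyPositive_or_stronglyNegative_of_inv_mul
    {I : Type*} {G : I → Type*} [∀ i, Group (G i)] [∀ i, Nontrivial (G i)]
    [LinearOrder (CoprodI G)]
    [CovariantClass (CoprodI G) (CoprodI G) (· * ·) (· ≤ ·)]
    (S T V : CoprodI.Word G)
    (hS : StronglyPositiveList S.toList) (hT : StronglyPositiveList T.toList)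
    (hV : V.prod = S.prod⁻¹ * T.prod)
    (hlen : V.toList.length = S.toList.length + T.toList.length) :
    StronglyPositiveList V.toList ∨ StronglyPositiveList (invList V.toList) :=
  stronglyPositive_or_stronglyNegative_of_inv_mul_general S T V hS hT hV hlen
end

section
/- Let F(a₁,…,a_m) be a free group with free basis a₁,…,a_m and let F(a,b) be a free group with free basis a, b. Then the group homomorphism μ : F(a₁,…,a_m) → F(a,b) determined by μ(a_i) = aⁱbⁱa⁻ⁱb⁻ⁱ for i = 1,…,m is injective. -/
/-!
Ping-pong for the action of `F(a,b)` on itself by left multiplication, with `Xᵢ` (resp. `Yᵢ`)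
the elements whose reduced word begins with `aⁱb` (resp. `bⁱa`). For `w ∉ Yᵢ`, the factor `b⁻ⁱ`
of `aⁱbⁱa⁻ⁱb⁻ⁱw` can only cancel against a leading block of `b`'s of `w`, and what survives does
not begin with `a`, so `aⁱbⁱa⁻ⁱ` is not cancelled at all and the product lies in `Xᵢ`. The inverse
`bⁱaⁱb⁻ⁱa⁻ⁱ` has the same shape with `a` and `b` exchanged, which gives `Xᵢᶜ ↦ Yᵢ`.
-/

open List

open scoped commutatorElement

universe u

theorem List.eq_of_replicate_append_singleton_prefix {β : Type*} {a b : β} (hab : a ≠ b)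
    {n m : ℕ} {L : List β} (hn : replicate n a ++ [b] <+: L) (hm : replicate m a ++ [b] <+: L) :
    n = m := by
  wlog hnm : n ≤ m generalizing n m
  · exact (this hm hn (by omega)).symm
  have h := prefix_of_prefix_length_le hn hm (by simpa)
  rw [← Nat.add_sub_cancel' hnm, replicate_add, append_assoc, prefix_append_right_inj] at h
  cases hk : m - n with
  | zero => omega
  | succ k => simp [hk, replicate_succ, hab.symm] at h

namespace FreeGroup

variable {α : Type u}

theorem isReduced_replicate_append {x : α} {b : Bool} {L : List (α × Bool)} (hL : IsReduced L)
    (hL' : (x, !b) ∉ L.head?) (k : ℕ) : IsReduced (replicate k (x, b) ++ L) := by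
  induction k with
  | zero => simpa
  | succ k ih =>
    rw [replicate_succ, cons_append]
    refine isChain_cons.2 ⟨?_, ih⟩
    rintro ⟨x', b'⟩ hd (rfl : x = x')
    cases k with
    | zero => cases b <;> cases b' <;> simp_all
    | succ k => simp_all [replicate_succ]

section DecidableEq

variable [DecidableEq α]

theorem toWord_mk_replicate_mul {x : α} {b : Bool} {u : FreeGroup α}
    (hu : (x, !b) ∉ u.toWord.head?) (k : ℕ) :
    (mk (replicate k (x, b)) * u).toWord = replicate k (x, b) ++ u.toWord := by
  rw [toWord_mul, toWord_mk, reduce_replicate,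
    (isReduced_replicate_append isReduced_toWord hu k).reduce_eq]

theorem toWord_of_pow_mul {x : α} {u : FreeGroup α} (hu : (x, false) ∉ u.toWord.head?)
    (k : ℕ) : (of x ^ k * u).toWord = replicate k (x, true) ++ u.toWord := by
  rw [← toWord_mk_replicate_mul hu, ← toWord_of_pow, mk_toWord]

theorem toWord_inv_of_pow_mul {x : α} {u : FreeGroup α} (hu : (x, true) ∉ u.toWord.head?)
    (k : ℕ) : ((of x ^ k)⁻¹ * u).toWord = replicate k (x, false) ++ u.toWord := by
  rw [← toWord_mk_replicate_mul hu, ← mk_toWord (x := of x ^ k), toWord_of_pow, inv_mk]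
  simp [invRev]

theorem not_mem_head?_toWord_inv_of_pow_mul {x y : α} {n : ℕ} {w : FreeGroup α}
    (hw : ¬ replicate n (y, true) ++ [(x, true)] <+: w.toWord) :
    (x, true) ∉ ((of y ^ n)⁻¹ * w).toWord.head? := by
  induction n generalizing w with
  | zero => simpa [Option.mem_def, ← singleton_prefix_iff_head?_eq_some] using hw
  | succ n ih =>
    by_cases hy : (y, true) ∈ w.toWord.head?
    · obtain ⟨L, hL⟩ : ∃ L, w.toWord = (y, true) :: L := by
        cases h : w.toWord <;> simp_all
      have hw' : (mk L).toWord = L := by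
        rw [toWord_mk, IsReduced.reduce_eq]
        exact (hL ▸ isReduced_toWord).of_cons
      have hw_eq : w = of y * mk L := by
        rw [← mk_toWord (x := w), hL]
        rfl
      rw [hw_eq, show (of y ^ (n + 1))⁻¹ * (of y * mk L) = (of y ^ n)⁻¹ * mk L by group]
      refine ih fun h => hw ?_
      rw [hL, replicate_succ, cons_append, cons_prefix_cons]
      exact ⟨rfl, hw' ▸ h⟩
    · rw [toWord_inv_of_pow_mul hy, replicate_succ]
      simp

def startsWithPow (x : α) (n : ℕ) (y : α) : Set (FreeGroup α) :=
  {w | replicate n (x, true) ++ [(y, true)] <+: w.toWord}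

theorem head?_toWord_of_mem_startsWithPow {x y : α} {n : ℕ} {w : FreeGroup α}
    (hw : w ∈ startsWithPow x (n + 1) y) : w.toWord.head? = some (x, true) := by
  rw [← singleton_prefix_iff_head?_eq_some]
  exact IsPrefix.trans (by simp [replicate_succ]) hw

theorem disjoint_startsWithPow_of_exponent_ne {x y : α} (hxy : x ≠ y) {n m : ℕ} (hnm : n ≠ m) :
    Disjoint (startsWithPow x n y) (startsWithPow x m y) :=
  Set.disjoint_left.2 fun _ hn hm => hnm (eq_of_replicate_append_singleton_prefix (by simpa) hn hm)

theorem disjoint_startsWithPow_of_head_ne {x x' : α} (hx : x ≠ x') (y y' : α) (n m : ℕ) :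
    Disjoint (startsWithPow x (n + 1) y) (startsWithPow x' (m + 1) y') :=
  Set.disjoint_left.2 fun _ hw hw' => by
    simpa [head?_toWord_of_mem_startsWithPow hw, hx] using head?_toWord_of_mem_startsWithPow hw'

theorem commutatorElement_pow_mul_mem_startsWithPow {x y : α} (hxy : x ≠ y) (n : ℕ)
    {w : FreeGroup α} (hw : w ∉ startsWithPow y (n + 1) x) :
    ⁅of x ^ (n + 1), of y ^ (n + 1)⁆ * w ∈ startsWithPow x (n + 1) y := by
  set u := (of y ^ (n + 1))⁻¹ * w
  have h₁ : ((of x ^ (n + 1))⁻¹ * u).toWord = replicate (n + 1) (x, false) ++ u.toWord :=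
    toWord_inv_of_pow_mul (not_mem_head?_toWord_inv_of_pow_mul hw) _
  have h₂ : (of y ^ (n + 1) * ((of x ^ (n + 1))⁻¹ * u)).toWord =
      replicate (n + 1) (y, true) ++ replicate (n + 1) (x, false) ++ u.toWord := by
    rw [toWord_of_pow_mul (by simp [h₁, replicate_succ, hxy]), h₁, append_assoc]
  have h₃ : ⁅of x ^ (n + 1), of y ^ (n + 1)⁆ * w =
      of x ^ (n + 1) * (of y ^ (n + 1) * ((of x ^ (n + 1))⁻¹ * u)) := by
    simp only [u, commutatorElement_def]
    group
  rw [startsWithPow, Set.mem_ofPred_eq, h₃,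
    toWord_of_pow_mul (by simp [h₂, replicate_succ, hxy.symm]), h₂, prefix_append_right_inj,
    replicate_succ]
  simp

end DecidableEq

theorem injective_lift_commutatorElement_pow {x y : α} (hxy : x ≠ y) :
    Function.Injective (lift fun i : ℕ => ⁅of x ^ (i + 1), of y ^ (i + 1)⁆) := by
  classical
  set c : ℕ → FreeGroup α := fun i => ⁅of x ^ (i + 1), of y ^ (i + 1)⁆
  -- `injective_lift_of_ping_pong` wants the index type in the universe of the group.
  have hc : Function.Injective (lift fun i : ULift.{u} ℕ => c i.down) := by
    apply injective_lift_of_ping_pong _ (fun i => startsWithPow x (i.down + 1) y)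
      (fun i => startsWithPow y (i.down + 1) x)
    · intro i
      refine ⟨of x ^ (i.down + 1) * of y, ?_⟩
      rw [startsWithPow, Set.mem_ofPred_eq, toWord_of_pow_mul (by simp [toWord_of, hxy.symm]),
        toWord_of]
    · exact fun i j hij =>
        disjoint_startsWithPow_of_exponent_ne hxy (by simpa using ULift.down_injective.ne hij)
    · exact fun i j hij =>
        disjoint_startsWithPow_of_exponent_ne hxy.symm (by simpa using ULift.down_injective.ne hij)
    · exact fun i j => disjoint_startsWithPow_of_head_ne hxy _ _ _ _
    · rintro i _ ⟨w, hw, rfl⟩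
      exact commutatorElement_pow_mul_mem_startsWithPow hxy _ hw
    · rintro i _ ⟨w, hw, rfl⟩
      rw [Pi.inv_apply, commutatorElement_inv]
      exact commutatorElement_pow_mul_mem_startsWithPow hxy.symm _ hw
  have hcomp : lift c = (lift fun i : ULift.{u} ℕ => c i.down).comp (map ULift.up) := by
    ext; simp
  rw [hcomp, MonoidHom.coe_comp]
  exact hc.comp (map_injective ULift.up_injective)

end FreeGroup

/-- The homomorphism `μ : F(a₁,…,a_m) → F(a,b)` determined by
`μ(aᵢ) = aⁱbⁱa⁻ⁱb⁻ⁱ` (for `i = 1,…,m`) is injective. Here `F(a₁,…,a_m)` is the free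
group on `Fin m` (with `aᵢ` the generator of index `i - 1`) and `F(a,b)` is the free
group on `Bool`, with `a = of true` and `b = of false`. -/
theorem injective_mu (m : ℕ) :
    Function.Injective
      (FreeGroup.lift (fun i : Fin m =>
        FreeGroup.of true ^ ((i : ℕ) + 1) * FreeGroup.of false ^ ((i : ℕ) + 1) *
          (FreeGroup.of true ^ ((i : ℕ) + 1))⁻¹ *
          (FreeGroup.of false ^ ((i : ℕ) + 1))⁻¹) :
        FreeGroup (Fin m) →* FreeGroup Bool) := by
  convert (FreeGroup.injective_lift_commutatorElement_pow (x := true) (y := false)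
    (by decide)).comp (FreeGroup.map_injective (Fin.val_injective (n := m))) using 1
  rw [← MonoidHom.coe_comp]
  congr 1
  ext
  simp [commutatorElement_def]
end

section
/- Let F(a₁,…,a_m) be a free group with free basis a₁,…,a_m, let F(a,b) be a free group with free basis a, b, and let μ : F(a₁,…,a_m) → F(a,b) be the homomorphism determined by μ(a_i) = aⁱbⁱa⁻ⁱb⁻ⁱ for i = 1,…,m. Then the image μ(F(a₁,…,a_m)) is a factor-free subgroup of F(a,b) regarded as the free product ⟨a⟩ * ⟨b⟩; that is, for every s ∈ F(a,b), μ(F(a₁,…,a_m)) ∩ s⟨a⟩s⁻¹ = {1} and μ(F(a₁,…,a_m)) ∩ s⟨b⟩s⁻¹ = {1}, where ⟨a⟩ and ⟨b⟩ denote the cyclic subgroups of F(a,b) generated by a and b. -/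
lemma factorFree_aux (m : ℕ)
    (μ : FreeGroup (Fin m) →* FreeGroup Bool)
    (hμ : ∀ i : Fin m,
      μ (FreeGroup.of i) =
        FreeGroup.of true ^ ((i : ℕ) + 1) * FreeGroup.of false ^ ((i : ℕ) + 1) *
          (FreeGroup.of true ^ ((i : ℕ) + 1))⁻¹ *
          (FreeGroup.of false ^ ((i : ℕ) + 1))⁻¹)
    (s : FreeGroup Bool) (c : Bool) :
    μ.range ⊓ Subgroup.map (MulAut.conj s).toMonoidHom
        (Subgroup.zpowers (FreeGroup.of c)) = ⊥ := by
  classical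
  set φ : FreeGroup Bool →* Multiplicative ℤ :=
    FreeGroup.lift (fun t => Multiplicative.ofAdd (if t = c then (1 : ℤ) else 0)) with hφ
  have hφμ : ∀ y : FreeGroup (Fin m), φ (μ y) = 1 := by
    have : φ.comp μ = 1 := by
      apply FreeGroup.ext_hom
      intro i
      simp only [MonoidHom.comp_apply, hμ, map_mul, map_inv, MonoidHom.one_apply]
      rw [mul_comm (φ (FreeGroup.of true ^ ((i : ℕ) + 1)))
        (φ (FreeGroup.of false ^ ((i : ℕ) + 1)))]
      group
    intro y
    have := DFunLike.congr_fun this y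
    simpa using this
  rw [Subgroup.eq_bot_iff_forall]
  rintro x ⟨⟨y, rfl⟩, hx2⟩
  obtain ⟨w, ⟨z, hz⟩, hw⟩ := hx2
  have hx : φ (μ y) = Multiplicative.ofAdd z := by
    rw [← hw]
    have hc : φ (FreeGroup.of c) = Multiplicative.ofAdd (1 : ℤ) := by simp [hφ]
    have : ((MulAut.conj s).toMonoidHom w : FreeGroup Bool) = s * w * s⁻¹ := rfl
    rw [this, map_mul, map_mul, map_inv, ← hz, map_zpow, hc, mul_comm (φ s)]
    rw [mul_assoc, mul_inv_cancel, mul_one, ← ofAdd_zsmul]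
    simp
  have hz0 : z = 0 := by
    have := hx.symm.trans (hφμ y)
    simpa using this
  rw [← hw, ← hz, hz0]
  simp

/-- Let `μ : F(a₁,…,a_m) → F(a,b)` be the homomorphism determined by
`μ(aᵢ) = aⁱbⁱa⁻ⁱb⁻ⁱ` (for `i = 1,…,m`), where `F(a₁,…,a_m)` is the free group on
`Fin m` and `F(a,b)` is the free group on `Bool` with `a = of true`, `b = of false`.
Then the image of `μ` is a factor-free subgroup of `F(a,b) = ⟨a⟩ * ⟨b⟩`: for every
`s ∈ F(a,b)`, `μ(F(a₁,…,a_m)) ∩ s⟨a⟩s⁻¹ = {1}` and `μ(F(a₁,…,a_m)) ∩ s⟨b⟩s⁻¹ = {1}`. -/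
theorem range_mu_factorFree (m : ℕ)
    (μ : FreeGroup (Fin m) →* FreeGroup Bool)
    (hμ : ∀ i : Fin m,
      μ (FreeGroup.of i) =
        FreeGroup.of true ^ ((i : ℕ) + 1) * FreeGroup.of false ^ ((i : ℕ) + 1) *
          (FreeGroup.of true ^ ((i : ℕ) + 1))⁻¹ *
          (FreeGroup.of false ^ ((i : ℕ) + 1))⁻¹)
    (s : FreeGroup Bool) :
    μ.range ⊓ Subgroup.map (MulAut.conj s).toMonoidHom
        (Subgroup.zpowers (FreeGroup.of true)) = ⊥ ∧
    μ.range ⊓ Subgroup.map (MulAut.conj s).toMonoidHom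
        (Subgroup.zpowers (FreeGroup.of false)) = ⊥ :=
  ⟨factorFree_aux m μ hμ s true, factorFree_aux m μ hμ s false⟩
end
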